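/- arXiv:1704.02537 — 8 statements merged into one kernel-verified Lean document; each statement's English description precedes it below -/
import Mathlib

section
/- For any function f : {-1,1}^n → {-1,1}, the margin of f is at most the margin of f ∘ XOR, i.e., m(f) ≤ m(f ∘ XOR). -/
open scoped BigOperators

noncomputable section

/-- sign value of a bit: `true` ↦ -1, `false` ↦ 1 (±1 encoding of the cube). -/
def sgnv (b : Bool) : ℝ := if b then -1 else 1

/-- the Fourier character χ_S on the ±1 cube. -/
def chi {ι : Type*} (S : Finset ι) (x : ι → Bool) : ℝ := ∏ i ∈ S, sgnv (x i)

/-- evaluation of the multilinear polynomial with coefficients `c`. -/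
def pEval {ι : Type*} [Fintype ι] [DecidableEq ι] (c : Finset ι → ℝ) (x : ι → Bool) : ℝ :=
  ∑ S : Finset ι, c S * chi S x

/-- weight of a polynomial: sum of absolute values of its coefficients. -/
def wt {ι : Type*} [Fintype ι] [DecidableEq ι] (c : Finset ι → ℝ) : ℝ :=
  ∑ S : Finset ι, |c S|

/-- `c` sign represents `f`. -/
def SignRep {ι : Type*} [Fintype ι] [DecidableEq ι] (c : Finset ι → ℝ)
    (f : (ι → Bool) → ℝ) : Prop := ∀ x, 0 < pEval c x * f x

/-- polynomial margin of `f`. -/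
def margin {ι : Type*} [Fintype ι] [DecidableEq ι] (f : (ι → Bool) → ℝ) : ℝ :=
  sSup {δ : ℝ | ∃ c : Finset ι → ℝ, wt c ≤ 1 ∧ SignRep c f ∧ ∀ x, δ ≤ pEval c x * f x}

/-- `f ∘ XOR` as a function on the `2n`-dimensional cube (indexed by `Fin n ⊕ Fin n`);
in the ±1 encoding the XOR of two bits is the product of the ±1 values. -/
def fXOR {n : ℕ} (f : (Fin n → Bool) → ℝ) : ((Fin n ⊕ Fin n) → Bool) → ℝ :=
  fun v => f (fun i => xor (v (Sum.inl i)) (v (Sum.inr i)))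


lemma sgnv_xor (a b : Bool) : sgnv (xor a b) = sgnv a * sgnv b := by
  cases a <;> cases b <;> simp [sgnv]

lemma abs_sgnv (b : Bool) : |sgnv b| = 1 := by cases b <;> simp [sgnv]

lemma abs_chi {ι : Type*} (S : Finset ι) (x : ι → Bool) : |chi S x| = 1 := by
  unfold chi
  rw [Finset.abs_prod]
  simp [abs_sgnv]

lemma abs_pEval_le {ι : Type*} [Fintype ι] [DecidableEq ι] (c : Finset ι → ℝ)
    (x : ι → Bool) : |pEval c x| ≤ wt c := by
  unfold pEval wt
  refine (Finset.abs_sum_le_sum_abs _ _).trans (le_of_eq ?_)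
  refine Finset.sum_congr rfl fun S _ => ?_
  rw [abs_mul, abs_chi, mul_one]

/-- the embedding of subsets of `Fin n` into subsets of `Fin n ⊕ Fin n`. -/
def eS {n : ℕ} (S : Finset (Fin n)) : Finset (Fin n ⊕ Fin n) :=
  S.map ⟨Sum.inl, Sum.inl_injective⟩ ∪ S.map ⟨Sum.inr, Sum.inr_injective⟩

lemma chi_eS {n : ℕ} (S : Finset (Fin n)) (v : (Fin n ⊕ Fin n) → Bool) :
    chi (eS S) v = chi S (fun i => xor (v (Sum.inl i)) (v (Sum.inr i))) := by
  unfold chi eS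
  rw [Finset.prod_union]
  · rw [Finset.prod_map, Finset.prod_map, ← Finset.prod_mul_distrib]
    exact Finset.prod_congr rfl fun i _ =>
      (sgnv_xor (v (Sum.inl i)) (v (Sum.inr i))).symm
  · rw [Finset.disjoint_left]
    rintro a ha hb
    simp only [Finset.mem_map, Function.Embedding.coeFn_mk] at ha hb
    obtain ⟨i, _, rfl⟩ := ha
    obtain ⟨j, _, h⟩ := hb
    exact Sum.inl_ne_inr h.symm

/-- for any `f : {-1,1}^n → {-1,1}`, `m(f) ≤ m(f ∘ XOR)`. -/
theorem margin_le_margin_fXOR (n : ℕ) (f : (Fin n → Bool) → ℝ)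
    (hf : ∀ x, f x = 1 ∨ f x = -1) :
    margin f ≤ margin (fXOR f) := by
  set A := {δ : ℝ | ∃ c : Finset (Fin n) → ℝ, wt c ≤ 1 ∧ SignRep c f ∧ ∀ x, δ ≤ pEval c x * f x}
  set B := {δ : ℝ | ∃ c : Finset (Fin n ⊕ Fin n) → ℝ,
      wt c ≤ 1 ∧ SignRep c (fXOR f) ∧ ∀ x, δ ≤ pEval c x * fXOR f x}
  have habs : ∀ v, |fXOR f v| = 1 := by
    intro v
    rcases hf (fun i => xor (v (Sum.inl i)) (v (Sum.inr i))) with h | h <;>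
      simp [fXOR, h]
  have hBdd : BddAbove B := by
    refine ⟨1, fun δ hδ => ?_⟩
    obtain ⟨c, hw, hs, hδ⟩ := hδ
    have x0 : (Fin n ⊕ Fin n) → Bool := fun _ => false
    calc δ ≤ pEval c x0 * fXOR f x0 := hδ x0
      _ ≤ |pEval c x0 * fXOR f x0| := le_abs_self _
      _ = |pEval c x0| := by rw [abs_mul, habs, mul_one]
      _ ≤ wt c := abs_pEval_le c x0
      _ ≤ 1 := hw
  have hsub : A ⊆ B := by
    rintro δ ⟨c, hw, hs, hδ⟩
    set c' : Finset (Fin n ⊕ Fin n) → ℝ :=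
      fun T => ∑ S : Finset (Fin n), if T = eS S then c S else 0 with hc'
    have hev : ∀ v, pEval c' v
        = pEval c (fun i => xor (v (Sum.inl i)) (v (Sum.inr i))) := by
      intro v
      unfold pEval
      simp only [hc', Finset.sum_mul, ite_mul, zero_mul]
      rw [Finset.sum_comm]
      refine Finset.sum_congr rfl fun S _ => ?_
      rw [Finset.sum_ite_eq' Finset.univ (eS S) (fun T => c S * chi T v)]
      simp [chi_eS]
    have hwt : wt c' ≤ wt c := by
      unfold wt
      calc ∑ T : Finset (Fin n ⊕ Fin n), |c' T|
          ≤ ∑ T : Finset (Fin n ⊕ Fin n), ∑ S : Finset (Fin n),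
            |if T = eS S then c S else 0| := by
            exact Finset.sum_le_sum fun T _ => Finset.abs_sum_le_sum_abs _ _
        _ = ∑ S : Finset (Fin n), ∑ T : Finset (Fin n ⊕ Fin n),
            if T = eS S then |c S| else 0 := by
            rw [Finset.sum_comm]
            refine Finset.sum_congr rfl fun S _ => Finset.sum_congr rfl fun T _ => ?_
            split <;> simp
        _ = ∑ S : Finset (Fin n), |c S| := by
            refine Finset.sum_congr rfl fun S _ => ?_
            rw [Finset.sum_ite_eq' Finset.univ (eS S) (fun _ => |c S|)]
            simp
    refine ⟨c', hwt.trans hw, fun v => ?_, fun v => ?_⟩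
    · rw [hev]; exact hs _
    · rw [hev]; exact hδ _
  rcases Set.eq_empty_or_nonempty A with hA | hA
  · show sSup A ≤ sSup B
    rw [hA, Real.sSup_empty]
    rcases Set.eq_empty_or_nonempty B with hB | hB
    · rw [hB, Real.sSup_empty]
    · obtain ⟨δ, c, hw, hs, hδ⟩ := hB
      have h0 : (0:ℝ) ∈ B := ⟨c, hw, hs, fun x => le_of_lt (hs x)⟩
      exact le_csSup hBdd h0
  · exact csSup_le_csSup hBdd hA hsub


end
end

section
/- For any function f : {-1,1}^n → {-1,1}, the margin of F = f ∘ XOR is at most 4 times the discrepancy of F: m(f ∘ XOR) ≤ 4·disc(f ∘ XOR). -/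
open scoped BigOperators

noncomputable section

/-- `λ` is a probability distribution on the finite type `α`. -/
def IsDistrib {α : Type*} [Fintype α] (lam : α → ℝ) : Prop :=
  (∀ a, 0 ≤ lam a) ∧ ∑ a, lam a = 1

/-- the discrepancy of the two-party function `F` under the distribution `lam`:
the maximum over rectangles `S × T` of `|∑_{(x,y)∈S×T} F x y · lam (x,y)|`. -/
def discUnder {α β : Type*} [Fintype α] [Fintype β] (lam : α × β → ℝ)
    (F : α → β → ℝ) : ℝ :=
  sSup {r : ℝ | ∃ S : Finset α, ∃ T : Finset β,
    r = |∑ x ∈ S, ∑ y ∈ T, F x y * lam (x, y)|}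

/-- the discrepancy of `F`: the minimum over distributions of `discUnder`. -/
def disc {α β : Type*} [Fintype α] [Fintype β] (F : α → β → ℝ) : ℝ :=
  sInf {d : ℝ | ∃ lam : α × β → ℝ, IsDistrib lam ∧ discUnder lam F = d}

/-- `f ∘ XOR` as a two-party function. -/
def fXOR2 {n : ℕ} (f : (Fin n → Bool) → ℝ) : (Fin n → Bool) → (Fin n → Bool) → ℝ :=
  fun x y => f (fun i => xor (x i) (y i))

/-!
Averaging `p · F ≥ δ` against any distribution `λ` gives `δ ≤ 𝔼_λ[p F] = ∑_S c_S 𝔼_λ[χ_S F]`.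
Splitting the variables into the `x`- and `y`-halves, `χ_S(x, y) = χ_{S_x}(x) χ_{S_y}(y)` is a
product of a `±1` function of `x` and a `±1` function of `y`, so `𝔼_λ[χ_S F]` is a signed combination
of four rectangle sums and is at most `4 disc_λ(F)` in absolute value. Summing with weights
`∑ |c_S| ≤ 1` gives `δ ≤ 4 disc_λ(F)` for every `λ`.
-/

open Finset

lemma chi_eq_one_or_neg_one {ι : Type*} (S : Finset ι) (x : ι → Bool) :
    chi S x = 1 ∨ chi S x = -1 := by
  refine prod_induction _ (fun r => r = 1 ∨ r = -1) ?_ (Or.inl rfl) fun i _ => ?_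
  · rintro a b (rfl | rfl) (rfl | rfl) <;> norm_num
  · cases x i <;> simp [sgnv]

lemma chi_sumElim {ι κ : Type*} (S : Finset (ι ⊕ κ)) (x : ι → Bool) (y : κ → Bool) :
    chi S (Sum.elim x y) = chi S.toLeft x * chi S.toRight y := by
  rw [chi, ← toLeft_disjSum_toRight (u := S), prod_disjSum]
  simp [chi]

lemma sum_mul_eq_sub_of_sign {α : Type*} [Fintype α] (e g : α → ℝ)
    (he : ∀ a, e a = 1 ∨ e a = -1) :
    ∑ a, e a * g a = ∑ a ∈ univ.filter (e · = 1), g a - ∑ a ∈ univ.filter (¬ e · = 1), g a := by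
  rw [← sum_filter_add_sum_filter_not univ (e · = 1), sub_eq_add_neg, ← sum_neg_distrib]
  congr 1
  · exact sum_congr rfl fun a ha => by rw [(mem_filter.mp ha).2, one_mul]
  · exact sum_congr rfl fun a ha => by rw [(he a).resolve_left (mem_filter.mp ha).2, neg_one_mul]

section Discrepancy

variable {α β : Type*} [Fintype α] [Fintype β]

lemma abs_sum_rectangle_le_discUnder (lam : α × β → ℝ) (F : α → β → ℝ)
    (S : Finset α) (T : Finset β) :
    |∑ x ∈ S, ∑ y ∈ T, F x y * lam (x, y)| ≤ discUnder lam F := by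
  classical
  refine le_csSup ?_ ⟨S, T, rfl⟩
  refine ((Set.finite_univ (α := Finset α × Finset β)).image
    fun p => |∑ x ∈ p.1, ∑ y ∈ p.2, F x y * lam (x, y)|).bddAbove.mono ?_
  rintro _ ⟨S, T, rfl⟩
  exact ⟨(S, T), trivial, rfl⟩

lemma discUnder_nonneg (lam : α × β → ℝ) (F : α → β → ℝ) : 0 ≤ discUnder lam F := by
  simpa using abs_sum_rectangle_le_discUnder lam F ∅ ∅

lemma disc_nonneg (F : α → β → ℝ) : 0 ≤ disc F :=
  Real.sInf_nonneg <| by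
    rintro _ ⟨lam, -, rfl⟩
    exact discUnder_nonneg lam F

lemma isDistrib_uniform [Nonempty α] : IsDistrib fun _ : α => (Fintype.card α : ℝ)⁻¹ := by
  refine ⟨fun _ => by positivity, ?_⟩
  rw [sum_const, card_univ, nsmul_eq_mul, mul_inv_cancel₀ (by exact_mod_cast Fintype.card_ne_zero)]

lemma le_disc [Nonempty α] [Nonempty β] {F : α → β → ℝ} {a : ℝ}
    (h : ∀ lam, IsDistrib lam → a ≤ discUnder lam F) : a ≤ disc F :=
  le_csInf ⟨_, _, isDistrib_uniform, rfl⟩ <| by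
    rintro _ ⟨lam, hlam, rfl⟩
    exact h lam hlam

lemma IsDistrib.le_sum_mul {lam : α → ℝ} (hlam : IsDistrib lam) {g : α → ℝ} {δ : ℝ}
    (hg : ∀ a, δ ≤ g a) : δ ≤ ∑ a, lam a * g a :=
  calc δ = ∑ a, lam a * δ := by rw [← sum_mul, hlam.2, one_mul]
    _ ≤ ∑ a, lam a * g a := sum_le_sum fun a _ => mul_le_mul_of_nonneg_left (hg a) (hlam.1 a)

lemma abs_sum_sign_mul_sign_le (lam : α × β → ℝ) (F : α → β → ℝ) (e : α → ℝ) (η : β → ℝ)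
    (he : ∀ x, e x = 1 ∨ e x = -1) (hη : ∀ y, η y = 1 ∨ η y = -1) :
    |∑ x, ∑ y, e x * η y * (F x y * lam (x, y))| ≤ 4 * discUnder lam F := by
  have hfactor : ∑ x, ∑ y, e x * η y * (F x y * lam (x, y))
      = ∑ x, e x * ∑ y, η y * (F x y * lam (x, y)) := by
    simp_rw [mul_sum, mul_assoc]
  rw [hfactor]
  simp_rw [sum_mul_eq_sub_of_sign η _ hη]
  rw [sum_mul_eq_sub_of_sign e _ he]
  simp only [sum_sub_distrib]
  set P := univ.filter (e · = 1)
  set N := univ.filter (¬ e · = 1)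
  set Q := univ.filter (η · = 1)
  set R := univ.filter (¬ η · = 1)
  have hPQ := abs_sum_rectangle_le_discUnder lam F P Q
  have hPR := abs_sum_rectangle_le_discUnder lam F P R
  have hNQ := abs_sum_rectangle_le_discUnder lam F N Q
  have hNR := abs_sum_rectangle_le_discUnder lam F N R
  refine (abs_sub _ _).trans ?_
  linarith [abs_sub (∑ x ∈ P, ∑ y ∈ Q, F x y * lam (x, y)) (∑ x ∈ P, ∑ y ∈ R, F x y * lam (x, y)),
    abs_sub (∑ x ∈ N, ∑ y ∈ Q, F x y * lam (x, y)) (∑ x ∈ N, ∑ y ∈ R, F x y * lam (x, y))]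

end Discrepancy

section Correlation

variable {ι κ : Type*} [Fintype ι] [DecidableEq ι] [Fintype κ] [DecidableEq κ]

lemma sum_mul_pEval_sumElim_mul (lam : (ι → Bool) × (κ → Bool) → ℝ)
    (c : Finset (ι ⊕ κ) → ℝ) (F : (ι → Bool) → (κ → Bool) → ℝ) :
    ∑ p, lam p * (pEval c (Sum.elim p.1 p.2) * F p.1 p.2)
      = ∑ S, c S * ∑ x, ∑ y, chi S.toLeft x * chi S.toRight y * (F x y * lam (x, y)) := by
  simp_rw [pEval, chi_sumElim, Fintype.sum_prod_type, sum_mul, mul_sum]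
  refine (sum_congr rfl fun x _ => sum_comm).trans <| sum_comm.trans <|
    sum_congr rfl fun S _ => sum_congr rfl fun x _ => sum_congr rfl fun y _ => by ring

lemma sum_mul_pEval_sumElim_mul_le (lam : (ι → Bool) × (κ → Bool) → ℝ)
    (c : Finset (ι ⊕ κ) → ℝ) (F : (ι → Bool) → (κ → Bool) → ℝ) :
    ∑ p, lam p * (pEval c (Sum.elim p.1 p.2) * F p.1 p.2) ≤ 4 * wt c * discUnder lam F := by
  rw [sum_mul_pEval_sumElim_mul, wt, mul_sum, sum_mul]
  refine sum_le_sum fun S _ => ?_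
  calc c S * ∑ x, ∑ y, chi S.toLeft x * chi S.toRight y * (F x y * lam (x, y))
      ≤ |c S| * |∑ x, ∑ y, chi S.toLeft x * chi S.toRight y * (F x y * lam (x, y))| :=
        (le_abs_self _).trans (abs_mul _ _).le
    _ ≤ |c S| * (4 * discUnder lam F) :=
        mul_le_mul_of_nonneg_left (abs_sum_sign_mul_sign_le lam F _ _
          (fun x => chi_eq_one_or_neg_one _ x) fun y => chi_eq_one_or_neg_one _ y) (abs_nonneg _)
    _ = 4 * |c S| * discUnder lam F := by ring

end Correlation

theorem margin_fXOR_le_four_disc_general (n : ℕ) (f : (Fin n → Bool) → ℝ) :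
    margin (fXOR f) ≤ 4 * disc (fXOR2 f) := by
  refine Real.sSup_le ?_ (by linarith [disc_nonneg (fXOR2 f)])
  rintro δ ⟨c, hwt, -, hδ⟩
  have hδ_le : ∀ lam, IsDistrib lam → δ ≤ 4 * discUnder lam (fXOR2 f) := fun lam hlam =>
    calc δ ≤ ∑ p, lam p * (pEval c (Sum.elim p.1 p.2) * fXOR2 f p.1 p.2) :=
          hlam.le_sum_mul fun p => hδ (Sum.elim p.1 p.2)
      _ ≤ 4 * wt c * discUnder lam (fXOR2 f) := sum_mul_pEval_sumElim_mul_le lam c _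
      _ ≤ 4 * discUnder lam (fXOR2 f) :=
          mul_le_mul_of_nonneg_right (by linarith) (discUnder_nonneg lam _)
  linarith [le_disc (F := fXOR2 f) (a := δ / 4) fun lam hlam => by linarith [hδ_le lam hlam]]

/-- for any `f : {-1,1}^n → {-1,1}`,
`m(f ∘ XOR) ≤ 4·disc(f ∘ XOR)`. -/
theorem margin_fXOR_le_four_disc (n : ℕ) (f : (Fin n → Bool) → ℝ)
    (hf : ∀ x, f x = 1 ∨ f x = -1) :
    margin (fXOR f) ≤ 4 * disc (fXOR2 f) :=
  margin_fXOR_le_four_disc_general n f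
end
end

section
/- Let m ≥ 2 be an odd integer, ω = e^{2πi/m}, and a ∈ {1,...,m−1}. Then max{|(1−ω^a)/2|, |(1+ω^a)/2|} ≤ cos(π/(2m)). -/
/-!
Write `ω ^ a = exp (i t)` and `-ω ^ a = exp (i (t + π))` with `t = 2πa/m`. Since
`|(1 + e^{is})/2|² = (1 + cos s)/2` and `cos² (π/(2m)) = (1 + cos (π/m))/2`, each bound reduces to
`cos s ≤ cos (π/m)`. Both angles are of the form `πk/m` with `k` not divisible by `2m`
(`k = 2a` with `0 < a < m`, and `k = 2a + m`, which is odd), and among those angles `π/m` has the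
largest cosine.
-/

open Complex

namespace Real

theorem cos_pi_mul_div_le_cos_pi_div_of_le {n j : ℕ} (hj : 1 ≤ j) (hjn : j ≤ n) :
    cos (π * j / n) ≤ cos (π / n) := by
  have hn : (0 : ℝ) < n := by norm_cast; omega
  have hj' : (1 : ℝ) ≤ j := by exact_mod_cast hj
  have hjn' : (j : ℝ) ≤ n := by exact_mod_cast hjn
  apply cos_le_cos_of_nonneg_of_le_pi (by positivity)
  · rw [div_le_iff₀ hn]
    exact mul_le_mul_of_nonneg_left hjn' pi_pos.le
  · gcongr
    simpa using mul_le_mul_of_nonneg_left hj' pi_pos.le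

theorem cos_pi_mul_div_le_cos_pi_div {n k : ℕ} (hk : ¬ 2 * n ∣ k) :
    cos (π * k / n) ≤ cos (π / n) := by
  rcases Nat.eq_zero_or_pos n with rfl | hn
  · simp
  set r := k % (2 * n)
  have hr0 : 0 < r := Nat.pos_of_ne_zero fun h => hk (Nat.dvd_of_mod_eq_zero h)
  have hr : r < 2 * n := Nat.mod_lt _ (by omega)
  have hn' : (n : ℝ) ≠ 0 := by positivity
  have hperiod : cos (π * k / n) = cos (π * r / n) := by
    have hk : (k : ℝ) = r + 2 * n * ↑(k / (2 * n)) := by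
      exact_mod_cast (Nat.mod_add_div k (2 * n)).symm
    rw [← cos_add_nat_mul_two_pi (π * r / n) (k / (2 * n)), hk]
    congr 1
    field_simp
  rw [hperiod]
  rcases le_total r n with h | h
  · exact cos_pi_mul_div_le_cos_pi_div_of_le hr0 h
  · have hreflect : cos (π * r / n) = cos (π * ↑(2 * n - r) / n) := by
      rw [← cos_two_pi_sub (π * ↑(2 * n - r) / n), Nat.cast_sub hr.le]
      congr 1
      field_simp
      push_cast
      ring
    rw [hreflect]
    exact cos_pi_mul_div_le_cos_pi_div_of_le (by omega) (by omega)

end Real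

theorem Complex.norm_one_add_exp_mul_I_sq (t : ℝ) :
    ‖1 + exp (t * I)‖ ^ 2 = 2 + 2 * Real.cos t := by
  rw [exp_mul_I, ← ofReal_cos, ← ofReal_sin, Complex.sq_norm, normSq_apply]
  simp only [add_re, add_im, one_re, one_im, mul_re, mul_im, I_re, I_im, ofReal_re, ofReal_im]
  linear_combination Real.sin_sq_add_cos_sq t

theorem Complex.norm_one_add_exp_mul_I_div_two_le {t θ : ℝ} (hθ : 0 ≤ Real.cos θ)
    (ht : Real.cos t ≤ Real.cos (2 * θ)) :
    ‖(1 + exp (t * I)) / 2‖ ≤ Real.cos θ := by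
  rw [← abs_of_nonneg hθ, ← abs_norm, ← sq_le_sq, norm_div, Complex.norm_two, div_pow,
    norm_one_add_exp_mul_I_sq, Real.cos_sq]
  linarith

theorem max_root_of_unity_bound_general (m : ℕ) (hodd : Odd m)
    (a : ℕ) (ha : 1 ≤ a) (ham : a ≤ m - 1) :
    max ‖(1 - Complex.exp (2 * Real.pi * Complex.I / m) ^ a) / 2‖
        ‖(1 + Complex.exp (2 * Real.pi * Complex.I / m) ^ a) / 2‖
      ≤ Real.cos (Real.pi / (2 * m)) := by
  have hm : (m : ℂ) ≠ 0 := by norm_cast; omega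
  have hω : exp (2 * Real.pi * I / m) ^ a = exp (↑(Real.pi * ↑(2 * a) / m) * I) := by
    rw [← exp_nat_mul]
    congr 1
    push_cast
    field_simp
  have hnegω : -exp (2 * Real.pi * I / m) ^ a = exp (↑(Real.pi * ↑(2 * a + m) / m) * I) := by
    rw [hω, ← exp_add_pi_mul_I]
    congr 1
    push_cast
    field_simp
  have hθ : 0 ≤ Real.cos (Real.pi / (2 * m)) := by
    have hm1 : (1 : ℝ) ≤ m := by norm_cast; omega
    have hθπ : Real.pi / (2 * m) ≤ Real.pi / 2 :=
      div_le_div_of_nonneg_left Real.pi_pos.le two_pos (by linarith)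
    exact Real.cos_nonneg_of_mem_Icc ⟨by linarith [Real.pi_pos, (by positivity : 0 ≤ Real.pi / (2 * m))], hθπ⟩
  have h2θ : 2 * (Real.pi / (2 * m)) = Real.pi / m := by field_simp
  refine max_le ?_ ?_
  · rw [sub_eq_add_neg, hnegω]
    refine norm_one_add_exp_mul_I_div_two_le hθ (h2θ ▸ Real.cos_pi_mul_div_le_cos_pi_div ?_)
    exact fun h => Nat.not_even_iff_odd.mpr ((even_two_mul a).add_odd hodd)
      ((even_two_mul m).trans_dvd h)
  · rw [hω]
    refine norm_one_add_exp_mul_I_div_two_le hθ (h2θ ▸ Real.cos_pi_mul_div_le_cos_pi_div ?_)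
    exact Nat.not_dvd_of_pos_of_lt (by omega) (by omega)

/-- for odd `m ≥ 2`, `ω = e^{2πi/m}` and `a ∈ {1,…,m−1}`,
`max{|(1−ω^a)/2|, |(1+ω^a)/2|} ≤ cos(π/(2m))`. -/
theorem max_root_of_unity_bound (m : ℕ) (hm : 2 ≤ m) (hodd : Odd m)
    (a : ℕ) (ha : 1 ≤ a) (ham : a ≤ m - 1) :
    max ‖(1 - Complex.exp (2 * Real.pi * Complex.I / m) ^ a) / 2‖
        ‖(1 + Complex.exp (2 * Real.pi * Complex.I / m) ^ a) / 2‖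
      ≤ Real.cos (Real.pi / (2 * m)) :=
  max_root_of_unity_bound_general m hodd a ha ham
end

section
/- Let m ≥ 3 be odd and let A ⊆ {0,1,...,m−1} be neither empty nor all of {0,...,m−1}. Define MOD_m^A : {0,1}^n → {-1,1} by MOD_m^A(x) = −1 if Σx_i mod m ∈ A and 1 otherwise. Then for every nonempty S ⊆ [n], |MOD_m^A-hat(S)| ≤ 2m·(cos(π/(2m)))^n, and |MOD_m^A-hat(∅)| ≤ 1 − 2/m + 2m·(cos(π/(2m)))^n. -/
open scoped BigOperators

noncomputable section

/-- the Fourier coefficient `f̂(S) = 2^{-n} Σ_x f(x) χ_S(x)`. -/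
def fhat {ι : Type*} [Fintype ι] [DecidableEq ι] (f : (ι → Bool) → ℝ) (S : Finset ι) : ℝ :=
  (∑ x : ι → Bool, f x * chi S x) / 2 ^ (Fintype.card ι)

/-- the Hamming weight of `x ∈ {0,1}^n`. -/
def cnt {n : ℕ} (x : Fin n → Bool) : ℕ := (Finset.univ.filter fun i => x i = true).card

/-- the function `MOD_m^A : {0,1}^n → {-1,1}`: value `-1` iff `Σ x_i mod m ∈ A`. -/
def MOD (n m : ℕ) (A : Finset ℕ) : (Fin n → Bool) → ℝ :=
  fun x => if cnt x % m ∈ A then -1 else 1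

/-!
With `ζ = exp(2πi/m)`, the roots-of-unity filter writes the indicator of `|x| ≡ j (mod m)` as
`m⁻¹ Σ_a ζ^{-aj} ζ^{a|x|}`, and the generating function
`Σ_x χ_S(x) z^{|x|} = (1 - z)^{|S|} (1 + z)^{n - |S|}` turns the Fourier coefficients of this
indicator into `m⁻¹ Σ_a ζ^{-aj} (1 - ζ^a)^{|S|} (1 + ζ^a)^{n - |S|}`. The term `a = 0` is the
coefficient of the constant `1`, divided by `m`. For `a ≠ 0`, `ζ^a` and `-ζ^a` are `2m`-th roots
of unity other than `1` (this is where `m` odd is needed), and `|1 + w| ≤ 2 cos(π/2m)` for every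
such root `w`; so each remaining term is at most `cos(π/2m)^n` after normalisation.
-/
open Finset Complex
open scoped Real

lemma sum_chi_mul_pow_cnt {n : ℕ} (S : Finset (Fin n)) (z : ℂ) :
    ∑ x : Fin n → Bool, (chi S x : ℂ) * z ^ cnt x = (1 - z) ^ #S * (1 + z) ^ (n - #S) := by
  let g : Fin n → Bool → ℂ := fun i b => (if i ∈ S then (sgnv b : ℂ) else 1) * (if b then z else 1)
  have hfactor : ∀ x : Fin n → Bool, (chi S x : ℂ) * z ^ cnt x = ∏ i, g i (x i) := by
    intro x
    rw [prod_mul_distrib, Fintype.prod_ite_mem, prod_ite, prod_const, prod_const_one, mul_one, cnt]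
    push_cast [chi]
    rfl
  have hfiber : ∀ i, ∑ b, g i b = if i ∈ S then 1 - z else 1 + z := by
    intro i
    by_cases hi : i ∈ S <;> simp [g, hi, sgnv, sub_eq_neg_add, add_comm]
  rw [Fintype.sum_congr _ _ hfactor, ← Fintype.prod_sum, Fintype.prod_congr _ _ hfiber, prod_ite,
    prod_const, prod_const, filter_mem_eq_inter, univ_inter, filter_notMem_eq_sdiff,
    ← compl_eq_univ_sdiff, card_compl, Fintype.card_fin]

lemma IsPrimitiveRoot.sum_pow_mul_inv_pow {K : Type*} [Field K] {ζ : K} {m : ℕ}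
    (hζ : IsPrimitiveRoot ζ m) (k j : ℕ) :
    ∑ a ∈ range m, (ζ ^ a) ^ k * ((ζ ^ a) ^ j)⁻¹ = if k ≡ j [MOD m] then (m : K) else 0 := by
  obtain rfl | hm := eq_or_ne m 0
  · simp
  set w := ζ ^ k * (ζ ^ j)⁻¹
  have hterm : ∀ a : ℕ, (ζ ^ a) ^ k * ((ζ ^ a) ^ j)⁻¹ = w ^ a := fun a => by
    rw [mul_pow, inv_pow, ← pow_mul, ← pow_mul, ← pow_mul, ← pow_mul, mul_comm a, mul_comm a]
  have hw : w = 1 ↔ k ≡ j [MOD m] := by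
    rw [mul_inv_eq_one₀ (pow_ne_zero _ (hζ.ne_zero hm)), (hζ.isOfFinOrder hm).pow_eq_pow_iff_modEq,
      ← hζ.eq_orderOf]
  simp_rw [hterm]
  split_ifs with hkj
  · simp [hw.2 hkj]
  · have hwm : w ^ m = 1 := by
      rw [← hterm, hζ.pow_eq_one, one_pow, one_pow, inv_one, mul_one]
    rw [geom_sum_eq (mt hw.1 hkj), hwm, sub_self, zero_div]

lemma IsPrimitiveRoot.natCast_mul_sum_filter_modEq {K α : Type*} [Field K] {ζ : K} {m : ℕ}
    (hζ : IsPrimitiveRoot ζ m) (s : Finset α) (k : α → ℕ) (f : α → K) (j : ℕ) :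
    (m : K) * ∑ x ∈ s with k x ≡ j [MOD m], f x =
      ∑ a ∈ range m, ((ζ ^ a) ^ j)⁻¹ * ∑ x ∈ s, f x * (ζ ^ a) ^ k x := by
  simp_rw [mul_sum, sum_filter]
  rw [sum_comm]
  refine sum_congr rfl fun x _ => ?_
  simp_rw [mul_left_comm _ (f x), ← mul_sum, mul_comm _ ((ζ ^ _) ^ k x), hζ.sum_pow_mul_inv_pow]
  split_ifs <;> ring

lemma Real.abs_cos_le_cos_of_le_of_le_pi_sub {x δ : ℝ} (hδ : 0 ≤ δ) (hx : δ ≤ x)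
    (hx' : x ≤ π - δ) : |Real.cos x| ≤ Real.cos δ := by
  rw [abs_le]
  constructor
  · rw [neg_le, ← Real.cos_pi_sub]
    exact Real.cos_le_cos_of_nonneg_of_le_pi hδ (by linarith) (by linarith)
  · exact Real.cos_le_cos_of_nonneg_of_le_pi hδ (by linarith) hx

lemma Real.abs_cos_pi_mul_div_le {N b : ℕ} (hb : ¬ N ∣ b) :
    |Real.cos (π * b / N)| ≤ Real.cos (π / N) := by
  obtain rfl | hN := Nat.eq_zero_or_pos N
  · simp
  have hr : 0 < b % N := Nat.pos_of_ne_zero (mt Nat.dvd_of_mod_eq_zero hb)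
  have hr' : b % N < N := Nat.mod_lt b hN
  have hsplit : π * b / N = π * (b % N : ℕ) / N + (b / N : ℕ) * π := by
    have : (b : ℝ) = (b % N : ℕ) + N * (b / N : ℕ) := by exact_mod_cast (Nat.mod_add_div b N).symm
    rw [this]
    field_simp
  have hNR : (0 : ℝ) < N := by exact_mod_cast hN
  rw [hsplit, Real.cos_add_nat_mul_pi, abs_mul, abs_pow, abs_neg, abs_one, one_pow, one_mul]
  apply Real.abs_cos_le_cos_of_le_of_le_pi_sub (by positivity)
  · gcongr
    rw [le_mul_iff_one_le_right pi_pos]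
    exact_mod_cast hr
  · rw [le_sub_iff_add_le, ← add_div, div_le_iff₀ hNR, ← mul_add_one]
    gcongr
    exact_mod_cast hr'

lemma Complex.norm_one_add_exp_I_mul_ofReal (x : ℝ) :
    ‖1 + exp (I * x)‖ = 2 * |Real.cos (x / 2)| := by
  have hshift : 1 + exp (I * x) = -(exp (I * ↑(x + π)) - 1) := by
    push_cast
    rw [mul_add, exp_add, mul_comm I (π : ℂ), exp_pi_mul_I]
    ring
  rw [hshift, norm_neg, norm_exp_I_mul_ofReal_sub_one, add_div, Real.sin_add_pi_div_two,
    norm_mul, Real.norm_two, Real.norm_eq_abs]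

lemma Complex.norm_one_add_exp_pow_le {N b : ℕ} (hb : ¬ N ∣ b) :
    ‖1 + exp (2 * π * I / N) ^ b‖ ≤ 2 * Real.cos (π / N) := by
  have h : exp (2 * π * I / N) ^ b = exp (I * ↑(2 * π * b / N)) := by
    rw [← Complex.exp_nat_mul]
    push_cast
    ring_nf
  rw [h, norm_one_add_exp_I_mul_ofReal, show 2 * π * b / N / 2 = π * b / N by ring]
  gcongr
  exact Real.abs_cos_pi_mul_div_le hb

lemma norm_one_sub_pow_mul_one_add_pow_le {m a s n : ℕ} (hodd : Odd m) (ha : 0 < a) (ha' : a < m)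
    (hs : s ≤ n) :
    ‖(1 - exp (2 * π * I / m) ^ a) ^ s * (1 + exp (2 * π * I / m) ^ a) ^ (n - s)‖ ≤
      (2 * Real.cos (π / (2 * m))) ^ n := by
  set ω := exp (2 * π * I / (2 * m))
  have hm : (m : ℂ) ≠ 0 := by exact_mod_cast hodd.pos.ne'
  have hζ : exp (2 * π * I / m) = ω ^ 2 := by
    rw [← Complex.exp_nat_mul]
    congr 1
    push_cast
    field_simp
  have hneg : ω ^ m = -1 := by
    rw [← Complex.exp_nat_mul, ← exp_pi_mul_I]
    congr 1
    field_simp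
  have hbound : ∀ b : ℕ, ¬ 2 * m ∣ b → ‖1 + ω ^ b‖ ≤ 2 * Real.cos (π / (2 * m)) := fun b hb => by
    have := norm_one_add_exp_pow_le hb
    push_cast at this
    exact this
  have hplus : ‖1 + exp (2 * π * I / m) ^ a‖ ≤ 2 * Real.cos (π / (2 * m)) := by
    rw [hζ, ← pow_mul]
    refine hbound _ fun h => ?_
    have := Nat.le_of_dvd (by omega) h
    omega
  have hminus : ‖1 - exp (2 * π * I / m) ^ a‖ ≤ 2 * Real.cos (π / (2 * m)) := by
    rw [hζ, ← pow_mul, sub_eq_add_neg, ← neg_one_mul, ← hneg, ← pow_add]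
    refine hbound _ fun h => ?_
    have := (dvd_mul_right 2 m).trans h
    obtain ⟨k, rfl⟩ := hodd
    omega
  rw [norm_mul, norm_pow, norm_pow, ← Nat.add_sub_cancel' hs, pow_add, Nat.add_sub_cancel_left]
  have hc : 0 ≤ 2 * Real.cos (π / (2 * m)) := (norm_nonneg _).trans hplus
  gcongr

lemma fhat_one {n : ℕ} (S : Finset (Fin n)) :
    fhat (1 : (Fin n → Bool) → ℝ) S = if S = ∅ then 1 else 0 := by
  have hsum : ∑ x : Fin n → Bool, chi S x = (1 - 1 : ℝ) ^ #S * (1 + 1) ^ (n - #S) := by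
    have h := sum_chi_mul_pow_cnt S 1
    simp only [one_pow, mul_one] at h
    exact_mod_cast h
  simp only [fhat, Pi.one_apply, one_mul, hsum, Fintype.card_fin, sub_self, one_add_one_eq_two]
  split_ifs with hS
  · simp [hS]
  · simp [card_ne_zero.2 (nonempty_iff_ne_empty.2 hS)]

lemma Real.cos_pi_div_two_mul_natCast_nonneg (m : ℕ) : 0 ≤ Real.cos (π / (2 * m)) := by
  obtain rfl | hm := Nat.eq_zero_or_pos m
  · simp
  apply Real.cos_nonneg_of_mem_Icc ⟨by linarith [show 0 ≤ π / (2 * m) by positivity, pi_pos], ?_⟩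
  have : (1 : ℝ) ≤ m := by exact_mod_cast hm
  gcongr
  linarith

lemma abs_sum_filter_modEq_chi_sub_le {n m : ℕ} (hodd : Odd m) (S : Finset (Fin n)) (j : ℕ) :
    |∑ x with cnt x ≡ j [MOD m], chi S x - (∑ x, chi S x) / m| ≤
      (2 * Real.cos (π / (2 * m))) ^ n := by
  set ζ := exp (2 * π * I / m)
  have hm : 0 < m := hodd.pos
  have hmR : (0 : ℝ) < m := by exact_mod_cast hm
  have hζ : IsPrimitiveRoot ζ m := isPrimitiveRoot_exp m hm.ne'
  have hfilter := hζ.natCast_mul_sum_filter_modEq univ cnt (fun x => (chi S x : ℂ)) j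
  rw [← add_sum_erase _ _ (mem_range.2 hm)] at hfilter
  simp only [pow_zero, one_pow, inv_one, mul_one, one_mul] at hfilter
  have herr : ‖∑ a ∈ (range m).erase 0, ((ζ ^ a) ^ j)⁻¹ * ∑ x, (chi S x : ℂ) * (ζ ^ a) ^ cnt x‖ ≤
      m * (2 * Real.cos (π / (2 * m))) ^ n := by
    calc _ ≤ ∑ a ∈ (range m).erase 0, ‖((ζ ^ a) ^ j)⁻¹ * ∑ x, (chi S x : ℂ) * (ζ ^ a) ^ cnt x‖ :=
          norm_sum_le _ _
      _ ≤ ∑ a ∈ (range m).erase 0, (2 * Real.cos (π / (2 * m))) ^ n := by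
          refine sum_le_sum fun a ha => ?_
          rw [norm_mul, norm_inv, norm_pow, norm_pow, hζ.norm'_eq_one hm.ne', one_pow, one_pow,
            inv_one, one_mul, sum_chi_mul_pow_cnt]
          exact norm_one_sub_pow_mul_one_add_pow_le hodd (Nat.pos_of_ne_zero (ne_of_mem_erase ha))
            (mem_range.1 (mem_of_mem_erase ha)) (card_le_univ S |>.trans_eq (Fintype.card_fin n))
      _ ≤ m * (2 * Real.cos (π / (2 * m))) ^ n := by
          have := Real.cos_pi_div_two_mul_natCast_nonneg m
          rw [sum_const, nsmul_eq_mul]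
          gcongr
          exact_mod_cast (card_erase_le).trans_eq (card_range m)
  have hcast : ((m * (∑ x with cnt x ≡ j [MOD m], chi S x - (∑ x, chi S x) / m) : ℝ) : ℂ) =
      ∑ a ∈ (range m).erase 0, ((ζ ^ a) ^ j)⁻¹ * ∑ x, (chi S x : ℂ) * (ζ ^ a) ^ cnt x := by
    push_cast
    rw [mul_sub, mul_div_cancel₀ _ (by exact_mod_cast hm.ne'), hfilter]
    ring
  have hscaled := herr
  rw [← hcast, Complex.norm_real, Real.norm_eq_abs, abs_mul, abs_of_pos hmR] at hscaled
  exact le_of_mul_le_mul_left hscaled hmR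

lemma sum_MOD_mul_chi {n m : ℕ} {A : Finset ℕ} (hA : A ⊆ range m) (S : Finset (Fin n)) :
    ∑ x, MOD n m A x * chi S x =
      ∑ x, chi S x - 2 * ∑ j ∈ A, ∑ x with cnt x ≡ j [MOD m], chi S x := by
  have hfiber : ∀ j ∈ A, ∑ x with cnt x ≡ j [MOD m], chi S x =
      ∑ x, if cnt x % m = j then chi S x else 0 := by
    intro j hj
    simp only [sum_filter, Nat.ModEq, Nat.mod_eq_of_lt (mem_range.1 (hA hj))]
  rw [sum_congr rfl hfiber, sum_comm, mul_sum, ← sum_sub_distrib]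
  refine sum_congr rfl fun x _ => ?_
  rw [sum_ite_eq, MOD]
  split_ifs <;> ring

lemma abs_fhat_MOD_sub_le {n m : ℕ} (hodd : Odd m) {A : Finset ℕ} (hA : A ⊆ range m)
    (S : Finset (Fin n)) :
    |fhat (MOD n m A) S - (1 - 2 * #A / m) * fhat 1 S| ≤
      2 * #A * Real.cos (π / (2 * m)) ^ n := by
  set N := fun j => ∑ x with cnt x ≡ j [MOD m], chi S x
  set T := ∑ x, chi S x
  have hdecomp : fhat (MOD n m A) S - (1 - 2 * #A / m) * fhat 1 S =
      -2 * ∑ j ∈ A, (N j - T / m) / 2 ^ n := by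
    simp only [fhat, Pi.one_apply, one_mul, Fintype.card_fin, sum_MOD_mul_chi hA, ← sum_div,
      sum_sub_distrib, sum_const, nsmul_eq_mul]
    ring
  have hterm : ∀ j, |(N j - T / m) / 2 ^ n| ≤ Real.cos (π / (2 * m)) ^ n := fun j => by
    rw [abs_div, abs_of_pos (by positivity : (0 : ℝ) < 2 ^ n), div_le_iff₀ (by positivity),
      mul_comm, ← mul_pow]
    exact abs_sum_filter_modEq_chi_sub_le hodd S j
  calc _ = 2 * |∑ j ∈ A, (N j - T / m) / 2 ^ n| := by rw [hdecomp, abs_mul]; norm_num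
    _ ≤ 2 * ∑ j ∈ A, Real.cos (π / (2 * m)) ^ n := by
        gcongr
        exact (abs_sum_le_sum_abs _ _).trans (sum_le_sum fun j _ => hterm j)
    _ = 2 * #A * Real.cos (π / (2 * m)) ^ n := by rw [sum_const, nsmul_eq_mul, mul_assoc]

lemma abs_one_sub_two_mul_div_le {k m : ℝ} (hk : 1 ≤ k) (hkm : k + 1 ≤ m) :
    |1 - 2 * k / m| ≤ 1 - 2 / m := by
  have hm : 0 < m := by linarith
  have hlow : 2 / m ≤ 2 * k / m := by gcongr; linarith
  have hhigh : 2 * k / m ≤ 2 - 2 / m := by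
    rw [div_le_iff₀ hm, sub_mul, div_mul_cancel₀ _ hm.ne']
    linarith
  rw [abs_le]
  constructor <;> linarith

theorem mod_fourier_bounds_general (n m : ℕ) (hodd : Odd m)
    (A : Finset ℕ) (hA : A ⊆ Finset.range m) (hne : A ≠ ∅) (hfull : A ≠ Finset.range m) :
    (∀ S : Finset (Fin n), S ≠ ∅ →
      |fhat (MOD n m A) S| ≤ 2 * m * Real.cos (Real.pi / (2 * m)) ^ n) ∧
    |fhat (MOD n m A) ∅| ≤ 1 - 2 / m + 2 * m * Real.cos (Real.pi / (2 * m)) ^ n := by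
  have hc := Real.cos_pi_div_two_mul_natCast_nonneg m
  have hAm : (#A : ℝ) ≤ m := by exact_mod_cast (card_le_card hA).trans_eq (card_range m)
  have herr : 2 * #A * Real.cos (π / (2 * m)) ^ n ≤ 2 * m * Real.cos (π / (2 * m)) ^ n := by
    gcongr
  refine ⟨fun S hS => ?_, ?_⟩
  · have key := abs_fhat_MOD_sub_le hodd hA S
    rw [fhat_one, if_neg hS, mul_zero, sub_zero] at key
    exact key.trans herr
  · have key := abs_fhat_MOD_sub_le hodd hA (∅ : Finset (Fin n))
    rw [fhat_one, if_pos rfl, mul_one] at key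
    have hA1 : (1 : ℝ) ≤ #A := by exact_mod_cast card_pos.2 (nonempty_iff_ne_empty.2 hne)
    have hA2 : (#A + 1 : ℝ) ≤ m := by
      exact_mod_cast (card_lt_card (ssubset_of_subset_of_ne hA hfull)).trans_eq (card_range m)
    have := abs_one_sub_two_mul_div_le hA1 hA2
    linarith [abs_sub_abs_le_abs_sub (fhat (MOD n m A) ∅) (1 - 2 * #A / m)]

/-- for odd `m ≥ 3` and accepting set `A` neither empty nor all of
`{0,…,m−1}`, all nonprincipal Fourier coefficients of `MOD_m^A` are at most
`2m·cos(π/2m)^n` in absolute value, and the principal one is at most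
`1 − 2/m + 2m·cos(π/2m)^n`. -/
theorem mod_fourier_bounds (n m : ℕ) (hm : 3 ≤ m) (hodd : Odd m)
    (A : Finset ℕ) (hA : A ⊆ Finset.range m) (hne : A ≠ ∅) (hfull : A ≠ Finset.range m) :
    (∀ S : Finset (Fin n), S ≠ ∅ →
      |fhat (MOD n m A) S| ≤ 2 * m * Real.cos (Real.pi / (2 * m)) ^ n) ∧
    |fhat (MOD n m A) ∅| ≤ 1 - 2 / m + 2 * m * Real.cos (Real.pi / (2 * m)) ^ n :=
  mod_fourier_bounds_general n m hodd A hA hne hfull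

end
end

section
/- For the complete quadratic function CQ : {0,1}^n → {-1,1} defined by CQ(x) = −1 iff (Σx_i mod 4) ∈ {0,1}, if n is even then |CQ-hat(S)| = 2^{−n/2} for all S ⊆ [n], and if n is odd then |CQ-hat(S)| ∈ {0, 2^{−(n−1)/2}} for all S ⊆ [n]. -/
open scoped BigOperators

noncomputable section

/-- the complete quadratic function: `CQ(x) = −1` iff `Σ x_i mod 4 ∈ {0,1}`. -/
def CQ (n : ℕ) : (Fin n → Bool) → ℝ :=
  fun x => if cnt x % 4 = 0 ∨ cnt x % 4 = 1 then -1 else 1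

lemma I_pow_mod (k : ℕ) : Complex.I ^ k = Complex.I ^ (k % 4) := by
  conv_lhs => rw [← Nat.div_add_mod k 4]
  rw [pow_add, pow_mul, Complex.I_pow_four, one_pow, one_mul]

lemma cq_eq {n : ℕ} (x : Fin n → Bool) :
    CQ n x = -((Complex.I ^ cnt x).re + (Complex.I ^ cnt x).im) := by
  rw [I_pow_mod]
  have h4 : cnt x % 4 < 4 := Nat.mod_lt _ (by norm_num)
  unfold CQ
  set r := cnt x % 4 with hr
  interval_cases r <;> norm_num [pow_succ]

lemma sum_I_chi {n : ℕ} (S : Finset (Fin n)) :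
    (∑ x : Fin n → Bool, Complex.I ^ cnt x * (chi S x : ℂ))
      = (1 + Complex.I) ^ (n - S.card) * (1 - Complex.I) ^ S.card := by
  have step : ∀ x : Fin n → Bool,
      Complex.I ^ cnt x * (chi S x : ℂ)
        = ∏ i : Fin n,
            ((if x i then Complex.I else 1) * (if i ∈ S then (sgnv (x i) : ℂ) else 1)) := by
    intro x
    rw [Finset.prod_mul_distrib]
    congr 1
    · rw [cnt, Finset.card_filter, ← Finset.prod_pow_eq_pow_sum]
      exact Finset.prod_congr rfl fun i _ => by by_cases h : x i <;> simp [h]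
    · rw [chi, Complex.ofReal_prod, ← Fintype.prod_ite_mem]
  calc (∑ x : Fin n → Bool, Complex.I ^ cnt x * (chi S x : ℂ))
      = ∑ x : Fin n → Bool, ∏ i : Fin n,
          ((if x i then Complex.I else 1) * (if i ∈ S then (sgnv (x i) : ℂ) else 1)) :=
        Finset.sum_congr rfl fun x _ => step x
    _ = ∏ i : Fin n, ∑ b : Bool,
          ((if b then Complex.I else 1) * (if i ∈ S then (sgnv b : ℂ) else 1)) :=
        (Fintype.prod_sum (fun (i : Fin n) (b : Bool) =>
          (if b then Complex.I else 1) * (if i ∈ S then (sgnv b : ℂ) else 1))).symm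
    _ = ∏ i : Fin n, (if i ∈ S then 1 - Complex.I else 1 + Complex.I) := by
        refine Finset.prod_congr rfl fun i _ => ?_
        rw [Fintype.sum_bool]
        by_cases h : i ∈ S <;> simp [h, sgnv] <;> ring
    _ = (1 + Complex.I) ^ (n - S.card) * (1 - Complex.I) ^ S.card := by
        rw [Finset.prod_ite (fun _ => (1 - Complex.I)) (fun _ => (1 + Complex.I))]
        simp only [Finset.prod_const]
        have h1 : (Finset.filter (fun x => x ∈ S) Finset.univ) = S := by
          ext i; simp
        have h2 : (Finset.filter (fun x => x ∉ S) Finset.univ) = Sᶜ := by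
          ext i; simp
        rw [h1, h2, Finset.card_compl, Fintype.card_fin, mul_comm]

lemma fhat_eq {n : ℕ} (S : Finset (Fin n)) :
    fhat (CQ n) S
      = -(((1 + Complex.I) ^ (n + 1) * Complex.I ^ (3 * (S.card + 1))).re) / 2 ^ n := by
  have hs : S.card ≤ n := by simpa using Finset.card_le_univ S
  unfold fhat
  rw [Fintype.card_fin]
  congr 1
  have h1 : ∀ x : Fin n → Bool,
      CQ n x * chi S x
        = -((Complex.I ^ cnt x * (chi S x : ℂ)).re + (Complex.I ^ cnt x * (chi S x : ℂ)).im) := by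
    intro x
    rw [cq_eq]
    simp [Complex.mul_re, Complex.mul_im]
    ring
  rw [Finset.sum_congr rfl fun x _ => h1 x, Finset.sum_neg_distrib, Finset.sum_add_distrib,
    ← Complex.re_sum, ← Complex.im_sum, sum_I_chi]
  set z := (1 + Complex.I) ^ (n - S.card) * (1 - Complex.I) ^ S.card with hz
  have hw : (1 + Complex.I) ^ (n + 1) * Complex.I ^ (3 * (S.card + 1)) = z * (1 - Complex.I) := by
    have h3 : (1 : ℂ) - Complex.I = (1 + Complex.I) * Complex.I ^ 3 := by
      rw [pow_succ, Complex.I_sq]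
      have := Complex.I_mul_I
      linear_combination this
    rw [hz, mul_assoc, ← pow_succ]
    conv_rhs => rw [h3]
    rw [mul_pow, ← pow_mul, ← mul_assoc, ← pow_add]
    congr 2
    omega
  rw [hw]
  have : (z * (1 - Complex.I)).re = z.re + z.im := by
    simp [Complex.mul_re]
  rw [this]

lemma abs_helper (a b : ℕ) (c : ℝ) (hc : |c| = 1) :
    |(-((2:ℝ) ^ a * c)) / 2 ^ (a + b)| = ((2:ℝ) ^ b)⁻¹ := by
  rw [abs_div, abs_neg, abs_mul, hc, mul_one, abs_of_pos (a := (2:ℝ)^a) (by positivity),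
    abs_of_pos (a := (2:ℝ)^(a+b)) (by positivity), pow_add]
  field_simp

lemma one_add_I_sq : ((1:ℂ) + Complex.I) ^ 2 = 2 * Complex.I := by
  linear_combination Complex.I_sq

/-- if `n` is even then every Fourier coefficient of `CQ` has absolute
value `2^{−n/2}`; if `n` is odd then every Fourier coefficient has absolute value
`0` or `2^{−(n−1)/2}`. -/
theorem cq_fourier (n : ℕ) :
    (Even n → ∀ S : Finset (Fin n), |fhat (CQ n) S| = ((2 : ℝ) ^ (n / 2 : ℕ))⁻¹) ∧
    (Odd n → ∀ S : Finset (Fin n),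
      |fhat (CQ n) S| = 0 ∨ |fhat (CQ n) S| = ((2 : ℝ) ^ ((n - 1) / 2 : ℕ))⁻¹) := by
  constructor
  · rintro ⟨m, hm⟩ S
    rw [fhat_eq]
    have hp : ((1:ℂ) + Complex.I) ^ (n + 1)
        = (2:ℂ) ^ m * (Complex.I ^ m * (1 + Complex.I)) := by
      rw [show n + 1 = 2 * m + 1 by omega, pow_add, pow_mul, one_add_I_sq, mul_pow, pow_one, mul_assoc]
    set t := (m + 3 * (S.card + 1)) % 4 with htd
    have hre : (((1:ℂ) + Complex.I) ^ (n + 1) * Complex.I ^ (3 * (S.card + 1))).re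
        = 2 ^ m * (Complex.I ^ t * (1 + Complex.I)).re := by
      rw [hp]
      have key : (2:ℂ) ^ m * (Complex.I ^ m * (1 + Complex.I)) * Complex.I ^ (3 * (S.card + 1))
          = ((2 ^ m : ℝ) : ℂ) * (Complex.I ^ (m + 3 * (S.card + 1)) * (1 + Complex.I)) := by
        push_cast
        rw [pow_add]
        ring
      rw [key, I_pow_mod (m + 3 * (S.card + 1)), ← htd, Complex.re_ofReal_mul]
    rw [hre, show n = m + m by omega, show (m + m) / 2 = m by omega]
    have ht : t < 4 := Nat.mod_lt _ (by norm_num)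
    interval_cases t <;>
      [ (have hc : ((Complex.I ^ 0 * (1 + Complex.I)).re) = 1 := by norm_num);
        (have hc : ((Complex.I ^ 1 * (1 + Complex.I)).re) = -1 := by
          simp [Complex.mul_re]);
        (have hc : ((Complex.I ^ 2 * (1 + Complex.I)).re) = -1 := by
          rw [Complex.I_sq]; simp);
        (have hc : ((Complex.I ^ 3 * (1 + Complex.I)).re) = 1 := by
          rw [pow_succ, Complex.I_sq]; simp [Complex.mul_re]) ] <;>
      rw [hc] <;> exact abs_helper m m _ (by norm_num)
  · rintro ⟨m, hm⟩ S
    rw [fhat_eq]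
    have hp : ((1:ℂ) + Complex.I) ^ (n + 1) = (2:ℂ) ^ (m + 1) * Complex.I ^ (m + 1) := by
      rw [show n + 1 = 2 * (m + 1) by omega, pow_mul, one_add_I_sq, mul_pow]
    set t := ((m + 1) + 3 * (S.card + 1)) % 4 with htd
    have hre : (((1:ℂ) + Complex.I) ^ (n + 1) * Complex.I ^ (3 * (S.card + 1))).re
        = 2 ^ (m + 1) * (Complex.I ^ t).re := by
      rw [hp]
      have key : (2:ℂ) ^ (m + 1) * Complex.I ^ (m + 1) * Complex.I ^ (3 * (S.card + 1))
          = ((2 ^ (m + 1) : ℝ) : ℂ) * Complex.I ^ ((m + 1) + 3 * (S.card + 1)) := by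
        push_cast
        rw [pow_add]
        ring
      rw [key, I_pow_mod ((m + 1) + 3 * (S.card + 1)), ← htd, Complex.re_ofReal_mul]
    rw [hre, show n = (m + 1) + m by omega, show ((m + 1) + m - 1) / 2 = m by omega]
    have ht : t < 4 := Nat.mod_lt _ (by norm_num)
    interval_cases t
    · right
      rw [show ((Complex.I ^ 0).re) = 1 by norm_num]
      exact abs_helper (m + 1) m _ (by norm_num)
    · left
      rw [show ((Complex.I ^ 1).re) = 0 by simp]
      simp
    · right
      rw [show ((Complex.I ^ 2).re) = -1 by rw [Complex.I_sq]; simp]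
      exact abs_helper (m + 1) m _ (by norm_num)
    · left
      rw [show ((Complex.I ^ 3).re) = 0 by rw [pow_succ, Complex.I_sq]; simp]
      simp


end
end

section
/- Let f : {-1,1}^n → {-1,1} be a linear threshold function, f(x) = sgn(Σ_{i=1}^n w_i x_i). Then the function f' : {-1,1}^{4n} → {-1,1} defined by f'(x,y,u,v) = sgn(Σ_{i=1}^n w_i(x_i + y_i − u_i + v_i)) is a linear threshold function such that the Krause–Pudlák lift f^op is a monomial projection of f', via the substitution u_i = x_i z_i and v_i = y_i z_i. -/
open scoped BigOperators

noncomputable section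

/-- for a linear threshold function `f(x) = sgn(Σ w_i x_i)` on
`{-1,1}^n` (with the weighted sum never zero on the cube), the linear threshold
function `f'(x,y,u,v) = sgn(Σ w_i (x_i + y_i − u_i + v_i))` satisfies: the
Krause–Pudlák lift `f^op(x,y,z) = f(u)` (`u_i = x_i` if `z_i = −1`, else `y_i`)
is the monomial projection of `f'` under the substitution `u_i = x_i z_i`,
`v_i = y_i z_i`. -/
theorem threshold_lift_projection (n : ℕ) (w : Fin n → ℝ)
    (hnz : ∀ v : Fin n → ℝ, (∀ i, v i = 1 ∨ v i = -1) → ∑ i, w i * v i ≠ 0)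
    (x y z : Fin n → ℝ)
    (hx : ∀ i, x i = 1 ∨ x i = -1) (hy : ∀ i, y i = 1 ∨ y i = -1)
    (hz : ∀ i, z i = 1 ∨ z i = -1) :
    Real.sign (∑ i, w i * (if z i = -1 then x i else y i)) =
      Real.sign (∑ i, w i * (x i + y i - (x i * z i) + (y i * z i))) := by
  have key : ∑ i, w i * (x i + y i - (x i * z i) + (y i * z i))
      = 2 * ∑ i, w i * (if z i = -1 then x i else y i) := by
    rw [Finset.mul_sum]
    apply Finset.sum_congr rfl
    intro i _
    rcases hz i with h | h <;> rw [h] <;> norm_num <;> ring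
  rw [key]
  rcases lt_trichotomy (∑ i, w i * (if z i = -1 then x i else y i)) 0 with h | h | h
  · rw [Real.sign_of_neg h, Real.sign_of_neg (by linarith)]
  · rw [h, mul_zero]
  · rw [Real.sign_of_pos h, Real.sign_of_pos (by linarith)]

end
end

section
/- Let F : {-1,1}^{4n} → {-1,1} be a symmetric function with predicate D_F : {0,...,4n} → {-1,1} (so F(x) = D_F(number of −1 entries in x)). Define the symmetric function f : {-1,1}^n → {-1,1} by predicate D_f(b) = D_F(2b + n) for b ∈ {0,...,n}. Then the Krause–Pudlák lift f^op : {-1,1}^{3n} → {-1,1} is a monomial projection of F; specifically, f^op(x,y,z) = F(x₁,...,x_n, y₁,...,y_n, −x₁z₁,...,−x_nz_n, y₁z₁,...,y_nz_n). -/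
open scoped BigOperators Classical

noncomputable section

/-- the number of coordinates of a real vector equal to `-1`. -/
def cntNeg {n : ℕ} (v : Fin n → ℝ) : ℕ :=
  (Finset.univ.filter fun i => v i = -1).card

/-- let `F : {-1,1}^{4n} → {-1,1}` be symmetric with predicate `D_F`
(so `F` evaluates `D_F` on the number of `−1` entries), and let `f` be the symmetric
function on `n` variables with predicate `D_f(b) = D_F(2b+n)`.  Then the
Krause–Pudlák lift `f^op` is a monomial projection of `F`:
`f^op(x,y,z) = F(x, y, −x⊙z, y⊙z)`. -/
theorem symmetric_lift_projection (n : ℕ) (D : ℕ → ℝ)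
    (hD : ∀ i, i ≤ 4 * n → D i = 1 ∨ D i = -1)
    (x y z : Fin n → ℝ)
    (hx : ∀ i, x i = 1 ∨ x i = -1) (hy : ∀ i, y i = 1 ∨ y i = -1)
    (hz : ∀ i, z i = 1 ∨ z i = -1) :
    D (cntNeg x + cntNeg y + cntNeg (fun i => -(x i * z i)) + cntNeg (fun i => y i * z i)) =
      D (2 * cntNeg (fun i => if z i = -1 then x i else y i) + n) := by
  congr 1
  have key : ∀ i : Fin n,
      ((if x i = -1 then 1 else 0) + (if y i = -1 then 1 else 0)
        + (if -(x i * z i) = -1 then 1 else 0) + (if y i * z i = -1 then 1 else 0) : ℕ)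
      = 2 * (if (if z i = -1 then x i else y i) = -1 then 1 else 0) + 1 := by
    intro i
    rcases hx i with h1 | h1 <;> rcases hy i with h2 | h2 <;> rcases hz i with h3 | h3 <;>
      simp [h1, h2, h3] <;> norm_num
  simp only [cntNeg, Finset.card_filter]
  rw [← Finset.sum_add_distrib, ← Finset.sum_add_distrib, ← Finset.sum_add_distrib,
    Finset.mul_sum]
  simp only [key, Finset.sum_add_distrib, Finset.sum_const, Finset.card_univ,
    Fintype.card_fin, smul_eq_mul, mul_one]

end
end

section
/- If f : {-1,1}^n → {-1,1} has sign degree deg_±(f) = d (every sign-representing polynomial of f has degree ≥ d), then the signed monomial complexity of its Krause–Pudlák lift satisfies mon_±(f^op) ≥ 2^d. -/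
/-!
Fix the selector block `z`. On that slice `f^op` is `f` applied to the selected half `u` of
`(x, y)`, independent of the unselected half `b`. Averaging a sign representation of `f^op`
over `b` keeps the sign and kills every monomial that reads an unselected variable, so the
surviving monomials give a sign representation of `f`; as `deg_± f ≥ d`, some nonzero monomial
survives `z` and reads at least `d` coordinates of `u`. A monomial survives only those `z` that
select, at each coordinate it reads, the half it reads there, so one reading `k ≥ d` coordinates
serves at most `2^(n-k) ≤ 2^(n-d)` selectors, and covering all `2^n` of them takes at least
`2^d` monomials.
-/

open scoped BigOperators Classical

noncomputable section

/-- number of monomials (nonzero coefficients) of the polynomial `c`. -/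
def monCount {ι : Type*} [Fintype ι] [DecidableEq ι] (c : Finset ι → ℝ) : ℕ :=
  (Finset.univ.filter fun S : Finset ι => c S ≠ 0).card

/-- the Krause–Pudlák selector lift `f^op : {-1,1}^{3n} → {-1,1}`. -/
def fop {n : ℕ} (f : (Fin n → Bool) → ℝ) : ((Fin n ⊕ Fin n ⊕ Fin n) → Bool) → ℝ :=
  fun v => f (fun i =>
    if v (Sum.inr (Sum.inr i)) then v (Sum.inl i) else v (Sum.inr (Sum.inl i)))

open Finset

namespace KrausePudlak

section Characters

variable {ι : Type*}

def chiFactor (S : Finset ι) (j : ι) (β : Bool) : ℝ := if j ∈ S then sgnv β else 1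

lemma chi_eq_prod_chiFactor [Fintype ι] (S : Finset ι) (x : ι → Bool) :
    chi S x = ∏ j, chiFactor S j (x j) :=
  (Fintype.prod_ite_mem S _).symm

lemma sum_chiFactor (S : Finset ι) (j : ι) :
    ∑ β, chiFactor S j β = if j ∈ S then 0 else 2 := by
  by_cases h : j ∈ S <;> simp [chiFactor, sgnv, h]

end Characters

variable {n : ℕ}

abbrev LiftVar (n : ℕ) := Fin n ⊕ Fin n ⊕ Fin n

def selected (z : Fin n → Bool) (i : Fin n) : LiftVar n :=
  if z i then .inl i else .inr (.inl i)

def unselected (z : Fin n → Bool) (i : Fin n) : LiftVar n :=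
  if z i then .inr (.inl i) else .inl i

def liftPoint (u b z : Fin n → Bool) : LiftVar n → Bool :=
  Sum.elim (fun i => if z i then u i else b i) (Sum.elim (fun i => if z i then b i else u i) z)

lemma fop_liftPoint (f : (Fin n → Bool) → ℝ) (u b z : Fin n → Bool) :
    fop f (liftPoint u b z) = f u := by
  unfold fop liftPoint
  congr 1
  funext i
  by_cases h : z i <;> simp [h]

lemma chi_liftPoint (S : Finset (LiftVar n)) (u b z : Fin n → Bool) :
    chi S (liftPoint u b z) = ∏ i, chiFactor S (selected z i) (u i) *
      chiFactor S (unselected z i) (b i) * chiFactor S (.inr (.inr i)) (z i) := by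
  rw [chi_eq_prod_chiFactor, Fintype.prod_sum_type, Fintype.prod_sum_type, ← prod_mul_distrib,
    ← prod_mul_distrib]
  refine prod_congr rfl fun i _ => ?_
  cases h : z i <;> simp [liftPoint, selected, unselected, h] <;> ring

def Survives (z : Fin n → Bool) (S : Finset (LiftVar n)) : Prop :=
  ∀ i, unselected z i ∉ S

def xySupport (S : Finset (LiftVar n)) : Finset (Fin n) :=
  univ.filter fun i => .inl i ∈ S ∨ .inr (.inl i) ∈ S

def selectorSign (S : Finset (LiftVar n)) (z : Fin n → Bool) : ℝ :=
  ∏ i, chiFactor S (.inr (.inr i)) (z i)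

lemma Survives.chiFactor_selected {z : Fin n → Bool} {S : Finset (LiftVar n)} (h : Survives z S)
    (i : Fin n) (β : Bool) : chiFactor S (selected z i) β = chiFactor (xySupport S) i β := by
  have := h i
  cases hz : z i <;> simp_all [chiFactor, selected, unselected, xySupport]

lemma Survives.eq_decide {z : Fin n → Bool} {S : Finset (LiftVar n)} (h : Survives z S)
    {i : Fin n} (hi : i ∈ xySupport S) : z i = decide (.inl i ∈ S) := by
  have := h i
  cases hz : z i <;> simp_all [unselected, xySupport]

lemma sum_chi_liftPoint (S : Finset (LiftVar n)) (u z : Fin n → Bool) :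
    ∑ b, chi S (liftPoint u b z) =
      if Survives z S then 2 ^ n * (chi (xySupport S) u * selectorSign S z) else 0 := by
  simp only [chi_liftPoint]
  rw [← Fintype.prod_sum fun i β => chiFactor S (selected z i) (u i) *
      chiFactor S (unselected z i) β * chiFactor S (.inr (.inr i)) (z i)]
  simp only [← sum_mul, ← mul_sum, sum_chiFactor]
  split_ifs with h
  · simp only [if_neg (h _), h.chiFactor_selected]
    rw [prod_mul_distrib, prod_mul_distrib, prod_const, card_univ, Fintype.card_fin,
      chi_eq_prod_chiFactor, selectorSign]
    ring
  · simp only [Survives, not_forall, not_not] at h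
    obtain ⟨i, hi⟩ := h
    exact prod_eq_zero (mem_univ i) (by simp [hi])

def averagedRestriction (c : Finset (LiftVar n) → ℝ) (z : Fin n → Bool) (T : Finset (Fin n)) :
    ℝ :=
  ∑ S ∈ univ.filter (Survives z) with xySupport S = T, c S * selectorSign S z

lemma pEval_averagedRestriction (c : Finset (LiftVar n) → ℝ) (u z : Fin n → Bool) :
    2 ^ n * pEval (averagedRestriction c z) u = ∑ b, pEval c (liftPoint u b z) := by
  calc 2 ^ n * pEval (averagedRestriction c z) u
      = 2 ^ n * ∑ S ∈ univ.filter (Survives z),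
          c S * selectorSign S z * chi (xySupport S) u := by
        rw [pEval, ← sum_fiberwise (univ.filter (Survives z)) xySupport]
        refine congrArg _ (sum_congr rfl fun T _ => ?_)
        rw [averagedRestriction, sum_mul]
        exact sum_congr rfl fun S hS => by rw [(mem_filter.1 hS).2]
    _ = ∑ S, c S * ∑ b, chi S (liftPoint u b z) := by
        simp only [sum_chi_liftPoint, mul_ite, mul_zero]
        rw [← sum_filter, mul_sum]
        exact sum_congr rfl fun _ _ => by ring
    _ = ∑ b, pEval c (liftPoint u b z) := by
        simp only [pEval, mul_sum]
        exact sum_comm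

lemma signRep_averagedRestriction {c : Finset (LiftVar n) → ℝ} {f : (Fin n → Bool) → ℝ}
    (hc : SignRep c (fop f)) (z : Fin n → Bool) : SignRep (averagedRestriction c z) f := by
  intro u
  have hsum : 0 < ∑ b, pEval c (liftPoint u b z) * f u :=
    sum_pos (fun b _ => by simpa [fop_liftPoint] using hc (liftPoint u b z)) univ_nonempty
  rw [← sum_mul, ← pEval_averagedRestriction, mul_assoc] at hsum
  exact pos_of_mul_pos_right hsum (by positivity)

lemma exists_survivor {d : ℕ} {c : Finset (LiftVar n) → ℝ} {f : (Fin n → Bool) → ℝ}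
    (hdeg : ∀ c : Finset (Fin n) → ℝ, SignRep c f → ∃ S, c S ≠ 0 ∧ d ≤ S.card)
    (hc : SignRep c (fop f)) (z : Fin n → Bool) :
    ∃ S, c S ≠ 0 ∧ d ≤ #(xySupport S) ∧ Survives z S := by
  obtain ⟨T, hT, hdT⟩ := hdeg _ (signRep_averagedRestriction hc z)
  obtain ⟨S, hS, hne⟩ := exists_ne_zero_of_sum_ne_zero hT
  simp only [mem_filter, mem_univ, true_and] at hS
  exact ⟨S, left_ne_zero_of_mul hne, hS.2 ▸ hdT, hS.1⟩

lemma card_survivors_le (S : Finset (LiftVar n)) :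
    #{z | Survives z S} ≤ 2 ^ (n - #(xySupport S)) := by
  calc #{z | Survives z S}
      ≤ #(Fintype.piFinset fun i =>
          if i ∈ xySupport S then {decide (.inl i ∈ S)} else (univ : Finset Bool)) := by
        refine card_le_card fun z hz => Fintype.mem_piFinset.2 fun i => ?_
        split_ifs with hi
        · exact mem_singleton.2 ((mem_filter.1 hz).2.eq_decide hi)
        · exact mem_univ _
    _ = 2 ^ (n - #(xySupport S)) := by
        simp [Fintype.card_piFinset, apply_ite, prod_ite, filter_not, card_sdiff]

lemma two_pow_le_card_of_forall_survives {d : ℕ} {t : Finset (Finset (LiftVar n))}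
    (hdt : ∀ S ∈ t, d ≤ #(xySupport S)) (ht : ∀ z, ∃ S ∈ t, Survives z S) :
    2 ^ d ≤ #t := by
  have hdn : d ≤ n := by
    obtain ⟨S, hS, -⟩ := ht fun _ => true
    simpa using (hdt S hS).trans (card_le_univ (xySupport S))
  have hcover : 2 ^ n ≤ #t * 2 ^ (n - d) :=
    calc 2 ^ n = #(univ : Finset (Fin n → Bool)) := by simp
      _ ≤ #(t.biUnion fun S => {z | Survives z S}) := card_le_card fun z _ => by
          obtain ⟨S, hS, hz⟩ := ht z
          exact mem_biUnion.2 ⟨S, hS, by simpa using hz⟩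
      _ ≤ #t * 2 ^ (n - d) := card_biUnion_le_card_mul _ _ _ fun S hS =>
          (card_survivors_le S).trans
            (Nat.pow_le_pow_right two_pos (Nat.sub_le_sub_left (hdt S hS) n))
  refine Nat.le_of_mul_le_mul_left (c := 2 ^ (n - d)) ?_ (Nat.two_pow_pos _)
  rwa [← pow_add, Nat.sub_add_cancel hdn, mul_comm]

end KrausePudlak

open KrausePudlak

theorem lift_monomial_complexity_general (n d : ℕ) (f : (Fin n → Bool) → ℝ)
    (hdeg : ∀ c : Finset (Fin n) → ℝ, SignRep c f → ∃ S, c S ≠ 0 ∧ d ≤ S.card) :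
    ∀ c : Finset (Fin n ⊕ Fin n ⊕ Fin n) → ℝ, SignRep c (fop f) →
      2 ^ d ≤ monCount c := by
  intro c hc
  have hlarge : 2 ^ d ≤ #{S | c S ≠ 0 ∧ d ≤ #(xySupport S)} :=
    two_pow_le_card_of_forall_survives (fun S hS => (mem_filter.1 hS).2.2) fun z => by
      obtain ⟨S, hS, hd, hz⟩ := exists_survivor hdeg hc z
      exact ⟨S, mem_filter.2 ⟨mem_univ S, hS, hd⟩, hz⟩
  exact hlarge.trans (card_le_card (monotone_filter_right _ fun _ _ => And.left))

/-- if every sign-representing polynomial of `f` has degree at least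
`d` (i.e. `deg_±(f) ≥ d`), then every sign-representing polynomial of the
Krause–Pudlák lift `f^op` has at least `2^d` monomials, i.e. `mon_±(f^op) ≥ 2^d`. -/
theorem lift_monomial_complexity (n d : ℕ) (f : (Fin n → Bool) → ℝ)
    (hf : ∀ x, f x = 1 ∨ f x = -1)
    (hdeg : ∀ c : Finset (Fin n) → ℝ, SignRep c f → ∃ S, c S ≠ 0 ∧ d ≤ S.card) :
    ∀ c : Finset (Fin n ⊕ Fin n ⊕ Fin n) → ℝ, SignRep c (fop f) →
      2 ^ d ≤ monCount c :=
  lift_monomial_complexity_general n d f hdeg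

end
end
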